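/- arXiv:2303.10504 — 9 statements merged into one kernel-verified Lean document; each statement's English description precedes it below -/
import Mathlib

section
/- Let α > 0 and t₀ ≤ t_f be real numbers. Let v : ℝ → ℝ be continuous on [t₀, t_f] and differentiable on [t₀, t_f], and let w : ℝ → ℝ satisfy 0 ≤ w(t) ≤ 1 for all t ∈ [t₀, t_f]. Suppose that for every t ∈ [t₀, t_f], if v(t) ≥ w(t)² then v'(t) ≤ -α·v(t). Then for every t ∈ [t₀, t_f], v(t) ≤ max{ e^{-α(t-t₀)}·v(t₀), 1 }. -/
/-!
Where `v > 1 ≥ w²` the hypothesis gives `v' ≤ -α v`, so `v(t) e^{α t}` does not increase there.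
Fix `t`. If `v > 1` on all of `[t₀, t]`, this yields `v(t) ≤ e^{-α(t-t₀)} v(t₀)`. Otherwise let `s`
be the last time in `[t₀, t]` with `v(s) ≤ 1`; on `(s, t]` we have `v > 1`, hence
`v(t) ≤ e^{-α(t-s)} v(s) ≤ 1` because `α > 0`.
-/

open Set Real

theorem le_exp_neg_mul_sub_mul_of_hasDerivAt_le {f f' : ℝ → ℝ} {α a b : ℝ} (hab : a ≤ b)
    (hf : ContinuousOn f (Icc a b)) (hf' : ∀ x ∈ Ioo a b, HasDerivAt f (f' x) x)
    (hdecay : ∀ x ∈ Ioo a b, f' x ≤ -α * f x) :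
    f b ≤ exp (-α * (b - a)) * f a := by
  have hφ : AntitoneOn (fun x => exp (α * x) * f x) (Icc a b) := by
    refine antitoneOn_of_hasDerivWithinAt_nonpos (convex_Icc a b)
      ((continuous_const.mul continuous_id).rexp.continuousOn.mul hf)
      (f' := fun x => exp (α * x) * (α * f x + f' x)) ?_ ?_
    · rw [interior_Icc]
      intro x hx
      have hexp : HasDerivAt (fun x => exp (α * x)) (exp (α * x) * α) x := by
        simpa [mul_comm] using ((hasDerivAt_id x).const_mul α).exp
      exact ((hexp.mul (hf' x hx)).congr_deriv (by ring)).hasDerivWithinAt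
    · rw [interior_Icc]
      intro x hx
      exact mul_nonpos_of_nonneg_of_nonpos (exp_pos _).le (by linarith [hdecay x hx])
  have hba : exp (α * b) * f b ≤ exp (α * a) * f a :=
    hφ (left_mem_Icc.mpr hab) (right_mem_Icc.mpr hab) hab
  calc f b = exp (-α * b) * (exp (α * b) * f b) := by
        rw [← mul_assoc, ← exp_add, neg_mul, neg_add_cancel, exp_zero, one_mul]
    _ ≤ exp (-α * b) * (exp (α * a) * f a) := mul_le_mul_of_nonneg_left hba (exp_pos _).le
    _ = exp (-α * (b - a)) * f a := by rw [← mul_assoc, ← exp_add]; ring_nf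

theorem ContinuousOn.exists_last_le {f : ℝ → ℝ} {a b c : ℝ} (hf : ContinuousOn f (Icc a b))
    (h : ∃ x ∈ Icc a b, f x ≤ c) : ∃ s ∈ Icc a b, f s ≤ c ∧ ∀ x ∈ Ioc s b, c < f x := by
  set S := Icc a b ∩ f ⁻¹' Iic c
  have hbdd : BddAbove S := bddAbove_Icc.mono inter_subset_left
  obtain ⟨hsI, hsc⟩ : sSup S ∈ S :=
    (hf.preimage_isClosed_of_isClosed isClosed_Icc isClosed_Iic).csSup_mem h hbdd
  refine ⟨sSup S, hsI, hsc, fun x hx => ?_⟩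
  by_contra! hxc
  exact (le_csSup hbdd ⟨⟨hsI.1.trans hx.1.le, hx.2⟩, hxc⟩).not_gt hx.1

theorem scalar_attractivity_general
    (α t₀ t_f : ℝ) (hα : 0 < α)
    (v v' w : ℝ → ℝ)
    (hv_diff : ∀ t ∈ Set.Icc t₀ t_f, HasDerivAt v (v' t) t)
    (hw : ∀ t ∈ Set.Icc t₀ t_f, 0 ≤ w t ∧ w t ≤ 1)
    (hlyap : ∀ t ∈ Set.Icc t₀ t_f, v t ≥ (w t) ^ 2 → v' t ≤ -α * v t) :
    ∀ t ∈ Set.Icc t₀ t_f,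
      v t ≤ max (Real.exp (-α * (t - t₀)) * v t₀) 1 := by
  intro t ht
  have hsub : ∀ s ∈ Icc t₀ t, Icc s t ⊆ Icc t₀ t_f := fun s hs => Icc_subset_Icc hs.1 ht.2
  have hv_cont : ContinuousOn v (Icc t₀ t) := fun x hx =>
    (hv_diff x (hsub t₀ (left_mem_Icc.mpr ht.1) hx)).continuousAt.continuousWithinAt
  have hdecay : ∀ s ∈ Icc t₀ t, (∀ x ∈ Ioc s t, 1 < v x) → v t ≤ exp (-α * (t - s)) * v s := by
    intro s hs hgt
    refine le_exp_neg_mul_sub_mul_of_hasDerivAt_le hs.2 (hv_cont.mono (Icc_subset_Icc hs.1 le_rfl))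
      (fun x hx => hv_diff x (hsub s hs (Ioo_subset_Icc_self hx))) (fun x hx => ?_)
    have hxI := hsub s hs (Ioo_subset_Icc_self hx)
    obtain ⟨hw₀, hw₁⟩ := hw x hxI
    exact hlyap x hxI ((pow_le_one₀ hw₀ hw₁).trans (hgt x (Ioo_subset_Ioc_self hx)).le)
  by_cases hdip : ∃ s ∈ Icc t₀ t, v s ≤ 1
  · obtain ⟨s, hs, hvs, hgt⟩ := hv_cont.exists_last_le hdip
    have hexp : exp (-α * (t - s)) ≤ 1 := exp_le_one_iff.mpr (by nlinarith [hs.2])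
    calc v t ≤ exp (-α * (t - s)) * v s := hdecay s hs hgt
      _ ≤ exp (-α * (t - s)) * 1 := mul_le_mul_of_nonneg_left hvs (exp_pos _).le
      _ ≤ _ := by rw [mul_one]; exact hexp.trans (le_max_right _ _)
  · push Not at hdip
    exact (hdecay t₀ (left_mem_Icc.mpr ht.1) fun x hx => hdip x (Ioc_subset_Icc_self hx)).trans
      (le_max_left _ _)

/-- Scalar comparison form of the attractivity property (Lemma 1):
if `v` satisfies the Lyapunov decrease condition `v' ≤ -α v` whenever `v ≥ w²`,
with `0 ≤ w ≤ 1`, then `v(t) ≤ max (exp (-α(t-t₀)) v(t₀)) 1` on `[t₀, t_f]`. -/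
theorem scalar_attractivity
    (α t₀ t_f : ℝ) (hα : 0 < α) (ht : t₀ ≤ t_f)
    (v v' w : ℝ → ℝ)
    (hv_cont : ContinuousOn v (Set.Icc t₀ t_f))
    (hv_diff : ∀ t ∈ Set.Icc t₀ t_f, HasDerivAt v (v' t) t)
    (hw : ∀ t ∈ Set.Icc t₀ t_f, 0 ≤ w t ∧ w t ≤ 1)
    (hlyap : ∀ t ∈ Set.Icc t₀ t_f, v t ≥ (w t) ^ 2 → v' t ≤ -α * v t) :
    ∀ t ∈ Set.Icc t₀ t_f,
      v t ≤ max (Real.exp (-α * (t - t₀)) * v t₀) 1 :=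
  scalar_attractivity_general α t₀ t_f hα v v' w hv_diff hw hlyap
end

section
/- Let α > 0 and t₀ ≤ t_f be real numbers. Let v : ℝ → ℝ be continuous on [t₀, t_f] and differentiable on [t₀, t_f], and let w : ℝ → ℝ satisfy 0 ≤ w(t) ≤ 1 for all t ∈ [t₀, t_f]. Suppose that for every t ∈ [t₀, t_f], if v(t) ≥ w(t)² then v'(t) ≤ -α·v(t). If v(t₀) ≤ 1, then v(t) ≤ 1 for all t ∈ [t₀, t_f]. -/
/-- Scalar comparison form of the invariance property (Lemma 1):
if `v` satisfies the Lyapunov decrease condition `v' ≤ -α v` whenever `v ≥ w²`,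
with `0 ≤ w ≤ 1`, and `v(t₀) ≤ 1`, then `v(t) ≤ 1` on `[t₀, t_f]`. -/
theorem scalar_invariance
    (α t₀ t_f : ℝ) (hα : 0 < α) (ht : t₀ ≤ t_f)
    (v v' w : ℝ → ℝ)
    (hv_cont : ContinuousOn v (Set.Icc t₀ t_f))
    (hv_diff : ∀ t ∈ Set.Icc t₀ t_f, HasDerivAt v (v' t) t)
    (hw : ∀ t ∈ Set.Icc t₀ t_f, 0 ≤ w t ∧ w t ≤ 1)
    (hlyap : ∀ t ∈ Set.Icc t₀ t_f, v t ≥ (w t) ^ 2 → v' t ≤ -α * v t)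
    (h0 : v t₀ ≤ 1) :
    ∀ t ∈ Set.Icc t₀ t_f, v t ≤ 1 := by
  have := image_le_of_deriv_right_lt_deriv_boundary (f := v) (f' := v') (a := t₀) (b := t_f)
    hv_cont
    (fun x hx => (hv_diff x (Set.mem_Icc_of_Ico hx)).hasDerivWithinAt)
    (B := fun _ => 1) (B' := fun _ => 0) h0 (fun _ => hasDerivAt_const _ _)
    ?_
  · exact fun t htm => this htm
  · intro x hx hfx
    have hxI : x ∈ Set.Icc t₀ t_f := Set.mem_Icc_of_Ico hx
    have hw2 : (w x) ^ 2 ≤ 1 := by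
      obtain ⟨h1, h2⟩ := hw x hxI
      nlinarith
    have := hlyap x hxI (by rw [hfx]; exact hw2)
    calc v' x ≤ -α * v x := this
      _ = -α := by rw [hfx]; ring
      _ < 0 := by linarith
end

section
/- (Lemma 1.) Let α > 0 and t₀ ≤ t_f be real numbers, let n and n_w be positive naturals, let η : ℝ → (Fin n → ℝ) be a function, let Q : ℝ → Matrix (Fin n) (Fin n) ℝ be such that Q(t) is symmetric positive definite for each t ∈ [t₀, t_f], and let w : ℝ → EuclideanSpace ℝ (Fin n_w) satisfy ‖w(t)‖ ≤ 1 for all t ∈ [t₀, t_f]. Define V(t) := η(t) ⬝ᵥ (Q(t)⁻¹ *ᵥ η(t)). Assume V is continuous on [t₀, t_f] and differentiable on [t₀, t_f], and that for every t ∈ [t₀, t_f], if V(t) ≥ ‖w(t)‖² then V'(t) ≤ -α·V(t). Then: (a) if η(t₀) ⬝ᵥ (Q(t₀)⁻¹ *ᵥ η(t₀)) ≤ 1, then η(t) ⬝ᵥ (Q(t)⁻¹ *ᵥ η(t)) ≤ 1 for all t ∈ [t₀, t_f] (invariance of the ellipsoid E(t) = {η : ηᵀQ(t)⁻¹η ≤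 1}); and (b) for all t ∈ [t₀, t_f], V(t) ≤ max{ e^{-α(t-t₀)}·V(t₀), 1 } (attractivity). -/
open Matrix

/-- Lemma 1: invariance and attractivity of the ellipsoid `E(t) = {η : ηᵀ Q(t)⁻¹ η ≤ 1}`
under the Lyapunov condition `V̇ ≤ -α V` whenever `V ≥ ‖w‖²`, where
`V(t) = η(t)ᵀ Q(t)⁻¹ η(t)` and `‖w(t)‖ ≤ 1`. -/
theorem lemma1_invariance_attractivity
    (α t₀ t_f : ℝ) (hα : 0 < α) (ht : t₀ ≤ t_f)
    (n n_w : ℕ) (hn : 0 < n) (hnw : 0 < n_w)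
    (η : ℝ → (Fin n → ℝ))
    (Q : ℝ → Matrix (Fin n) (Fin n) ℝ)
    (hQ : ∀ t ∈ Set.Icc t₀ t_f, (Q t).PosDef)
    (w : ℝ → EuclideanSpace ℝ (Fin n_w))
    (hw : ∀ t ∈ Set.Icc t₀ t_f, ‖w t‖ ≤ 1)
    (V V' : ℝ → ℝ)
    (hV : ∀ t, V t = η t ⬝ᵥ ((Q t)⁻¹ *ᵥ η t))
    (hV_cont : ContinuousOn V (Set.Icc t₀ t_f))
    (hV_diff : ∀ t ∈ Set.Icc t₀ t_f, HasDerivAt V (V' t) t)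
    (hlyap : ∀ t ∈ Set.Icc t₀ t_f, V t ≥ ‖w t‖ ^ 2 → V' t ≤ -α * V t) :
    ((η t₀ ⬝ᵥ ((Q t₀)⁻¹ *ᵥ η t₀) ≤ 1 →
        ∀ t ∈ Set.Icc t₀ t_f, η t ⬝ᵥ ((Q t)⁻¹ *ᵥ η t) ≤ 1) ∧
      (∀ t ∈ Set.Icc t₀ t_f,
        V t ≤ max (Real.exp (-α * (t - t₀)) * V t₀) 1)) := by
  -- the bound function
  set M : ℝ → ℝ := fun t => max (Real.exp (-α * (t - t₀)) * V t₀) 1 with hM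
  -- nonnegativity of V
  have hVnonneg : ∀ t ∈ Set.Icc t₀ t_f, 0 ≤ V t := by
    intro t htt
    rw [hV t]
    have h := ((hQ t htt).inv.posSemidef).re_dotProduct_nonneg (η t)
    simpa using h
  -- w squared bounded by 1
  have hw2 : ∀ t ∈ Set.Icc t₀ t_f, ‖w t‖ ^ 2 ≤ 1 := by
    intro t htt
    have := hw t htt
    nlinarith [norm_nonneg (w t)]
  -- Main claim (b)
  have main : ∀ t₁ ∈ Set.Icc t₀ t_f, V t₁ ≤ M t₁ := by
    intro t₁ ht₁
    by_contra hcon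
    push_neg at hcon  -- M t₁ < V t₁
    have ht₀₁ : t₀ ≤ t₁ := ht₁.1
    set S : Set ℝ := {t ∈ Set.Icc t₀ t₁ | V t ≤ M t} with hS
    have hMt₀ : V t₀ ≤ M t₀ := by
      have : Real.exp (-α * (t₀ - t₀)) = 1 := by simp
      rw [hM]; simp only [this, one_mul]
      exact le_max_left _ _
    have hne : S.Nonempty := ⟨t₀, ⟨le_refl _, ht₀₁⟩, hMt₀⟩
    have hsub : Set.Icc t₀ t₁ ⊆ Set.Icc t₀ t_f := Set.Icc_subset_Icc le_rfl ht₁.2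
    have hMcont : Continuous M := by
      apply Continuous.max _ continuous_const
      exact (Real.continuous_exp.comp (continuous_const.mul (continuous_id.sub continuous_const))).mul continuous_const
    have hSclosed : IsClosed S := by
      have hc : ContinuousOn (fun t => V t - M t) (Set.Icc t₀ t₁) :=
        (hV_cont.mono hsub).sub hMcont.continuousOn
      have : S = Set.Icc t₀ t₁ ∩ (fun t => V t - M t) ⁻¹' Set.Iic 0 := by
        ext x; simp [hS, Set.mem_Icc, sub_nonpos, and_comm]
      rw [this]
      exact hc.preimage_isClosed_of_isClosed isClosed_Icc isClosed_Iic
    have hScompact : IsCompact S := isCompact_Icc.of_isClosed_subset hSclosed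
      fun x hx => hx.1
    set s := sSup S with hs
    have hsS : s ∈ S := hScompact.sSup_mem hne
    have hst₀ : t₀ ≤ s := hsS.1.1
    have hst₁ : s ≤ t₁ := hsS.1.2
    have hVsMs : V s ≤ M s := hsS.2
    have hsne : s ≠ t₁ := by
      intro h; rw [h] at hVsMs; exact absurd hVsMs (not_le.mpr hcon)
    have hslt : s < t₁ := lt_of_le_of_ne hst₁ hsne
    -- on (s, t₁], V > M
    have hVgt : ∀ x ∈ Set.Ioc s t₁, M x < V x := by
      intro x hx
      by_contra hle
      push_neg at hle
      have hxS : x ∈ S := ⟨⟨hst₀.trans hx.1.le, hx.2⟩, hle⟩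
      have : x ≤ s := le_csSup hScompact.bddAbove hxS
      exact absurd this (not_le.mpr hx.1)
    -- the function g
    set g : ℝ → ℝ := fun t => V t * Real.exp (α * (t - t₀)) with hg
    have hgderiv : ∀ x ∈ Set.Icc t₀ t_f,
        HasDerivAt g (V' x * Real.exp (α * (x - t₀)) +
          V x * (Real.exp (α * (x - t₀)) * α)) x := by
      intro x hx
      have h1 : HasDerivAt (fun t : ℝ => α * (t - t₀)) α x := by
        simpa using ((hasDerivAt_id x).sub_const t₀).const_mul α
      have h2 : HasDerivAt (fun t : ℝ => Real.exp (α * (t - t₀)))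
          (Real.exp (α * (x - t₀)) * α) x := h1.exp
      exact (hV_diff x hx).mul h2
    have hanti : AntitoneOn g (Set.Icc s t₁) := by
      have hsub2 : Set.Icc s t₁ ⊆ Set.Icc t₀ t_f :=
        Set.Icc_subset_Icc hst₀ ht₁.2
      apply antitoneOn_of_deriv_nonpos (convex_Icc s t₁)
      · exact ((hV_cont.mono hsub2).mul
          ((Real.continuous_exp.comp (continuous_const.mul (continuous_id.sub continuous_const))).continuousOn))
      · intro x hx
        rw [interior_Icc] at hx
        exact ((hgderiv x (hsub2 ⟨hx.1.le, hx.2.le⟩)).differentiableAt).differentiableWithinAt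
      · intro x hx
        rw [interior_Icc] at hx
        have hxmem : x ∈ Set.Icc t₀ t_f := Set.Icc_subset_Icc hst₀ ht₁.2 ⟨hx.1.le, hx.2.le⟩
        have hd := (hgderiv x hxmem).deriv
        rw [hd]
        have hMx1 : 1 ≤ M x := le_max_right _ _
        have hVx : ‖w x‖ ^ 2 ≤ V x := by
          have h1 := hVgt x ⟨hx.1, hx.2.le⟩
          have h2 := hw2 x hxmem
          linarith
        have hlyapx := hlyap x hxmem hVx
        have hexp : 0 < Real.exp (α * (x - t₀)) := Real.exp_pos _
        nlinarith
    have hgle : g t₁ ≤ g s :=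
      hanti ⟨le_refl s, hst₁⟩ ⟨hst₁, le_refl t₁⟩ hst₁
    -- conclude the contradiction
    have hEs : Real.exp (-α * (s - t₀)) * Real.exp (α * (s - t₀)) = 1 := by
      rw [← Real.exp_add]; ring_nf; exact Real.exp_zero
    have hEt : Real.exp (-α * (t₁ - t₀)) * Real.exp (α * (t₁ - t₀)) = 1 := by
      rw [← Real.exp_add]; ring_nf; exact Real.exp_zero
    have hEle : Real.exp (α * (s - t₀)) ≤ Real.exp (α * (t₁ - t₀)) := by
      apply Real.exp_le_exp.mpr
      nlinarith
    have hexp₁ : 0 < Real.exp (α * (t₁ - t₀)) := Real.exp_pos _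
    have hexps : 0 < Real.exp (α * (s - t₀)) := Real.exp_pos _
    rcases le_total (Real.exp (-α * (s - t₀)) * V t₀) 1 with hcase | hcase
    · -- M s = 1
      have hMs : M s = 1 := by rw [hM]; exact max_eq_right hcase
      rw [hMs] at hVsMs
      have h1 : V t₁ * Real.exp (α * (t₁ - t₀)) ≤ Real.exp (α * (s - t₀)) := by
        calc V t₁ * Real.exp (α * (t₁ - t₀)) = g t₁ := rfl
          _ ≤ g s := hgle
          _ = V s * Real.exp (α * (s - t₀)) := rfl
          _ ≤ 1 * Real.exp (α * (s - t₀)) := by nlinarith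
          _ = Real.exp (α * (s - t₀)) := one_mul _
      have hVt₁le : V t₁ ≤ 1 := by nlinarith
      have : M t₁ < 1 := lt_of_lt_of_le hcon hVt₁le
      exact absurd (le_max_right _ 1 : (1:ℝ) ≤ M t₁) (not_le.mpr this)
    · -- M s = exp(-α(s-t₀)) * V t₀
      have hMs : M s = Real.exp (-α * (s - t₀)) * V t₀ := by
        rw [hM]; exact max_eq_left hcase
      rw [hMs] at hVsMs
      have h1 : V t₁ * Real.exp (α * (t₁ - t₀)) ≤ V t₀ := by
        calc V t₁ * Real.exp (α * (t₁ - t₀)) = g t₁ := rfl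
          _ ≤ g s := hgle
          _ = V s * Real.exp (α * (s - t₀)) := rfl
          _ ≤ (Real.exp (-α * (s - t₀)) * V t₀) * Real.exp (α * (s - t₀)) := by nlinarith
          _ = V t₀ := by rw [mul_comm (Real.exp (-α * (s - t₀))) (V t₀), mul_assoc, hEs, mul_one]
      have h2 : Real.exp (-α * (t₁ - t₀)) * V t₀ ≤ M t₁ := le_max_left _ _
      have h3 : Real.exp (-α * (t₁ - t₀)) * V t₀ < V t₁ := lt_of_le_of_lt h2 hcon
      have h4 := mul_lt_mul_of_pos_right h3 hexp₁
      have h5 : Real.exp (-α * (t₁ - t₀)) * V t₀ * Real.exp (α * (t₁ - t₀)) = V t₀ := by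
        rw [mul_comm (Real.exp (-α * (t₁ - t₀))) (V t₀), mul_assoc, hEt, mul_one]
      rw [h5] at h4
      linarith
  refine ⟨?_, main⟩
  intro h1 t htt
  have hb := main t htt
  have hVt₀ : V t₀ ≤ 1 := by rw [hV]; exact h1
  have hVt₀0 : 0 ≤ V t₀ := hVnonneg t₀ ⟨le_refl _, ht⟩
  have hexple : Real.exp (-α * (t - t₀)) ≤ 1 := by
    apply Real.exp_le_one_iff.mpr  -- exp x ≤ 1 ↔ x ≤ 0
    nlinarith [htt.1]
  have : max (Real.exp (-α * (t - t₀)) * V t₀) 1 ≤ 1 := by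
    apply max_le _ le_rfl
    nlinarith [Real.exp_pos (-α * (t - t₀))]
  rw [← hV t]
  exact hb.trans this
end

section
/- (Theorem 1, pointwise algebraic form.) Let n, m, p, n_w, q be positive naturals and let A : Matrix (Fin n) (Fin n) ℝ, B : Matrix (Fin n) (Fin m) ℝ, E : Matrix (Fin n) (Fin p) ℝ, F : Matrix (Fin n) (Fin n_w) ℝ, C : Matrix (Fin q) (Fin n) ℝ, D : Matrix (Fin q) (Fin m) ℝ, G : Matrix (Fin q) (Fin n_w) ℝ be real matrices. Let Q : Matrix (Fin n) (Fin n) ℝ be symmetric positive definite, let Q̇ : Matrix (Fin n) (Fin n) ℝ be symmetric, let Y : Matrix (Fin m) (Fin n) ℝ, and let ν > 0, λ_w > 0, α > 0, γ > 0 be reals. Set M := Q·Aᵀ + Yᵀ·Bᵀ + A·Q + B·Y + α·Q + λ_w·Q and K := Y·Q⁻¹. Suppose the symmetric 4×4 block matrix H with diagonal blocks (M - Q̇, -ν·I_p, -λ_w·I_{n_w}, -(ν/γ²)·I_q), with (2,1) block ν·Eᵀ, (3,1) block Fᵀ, (4,1) block C·Q + D·Y, (4,3) block G, and zero (3,2)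 and (4,2) blocks, is negative semidefinite (i.e., -H is positive semidefinite). Then for all η : Fin n → ℝ, w : Fin n_w → ℝ, and δp : Fin p → ℝ satisfying √(δp ⬝ᵥ δp) ≤ γ·√(δq ⬝ᵥ δq) where δq := C *ᵥ η + D *ᵥ (K *ᵥ η) + G *ᵥ w, and satisfying η ⬝ᵥ (Q⁻¹ *ᵥ η) ≥ w ⬝ᵥ w, it holds that 2·(η ⬝ᵥ (Q⁻¹ *ᵥ ((A + B·K) *ᵥ η + F *ᵥ w + E *ᵥ δp))) − η ⬝ᵥ ((Q⁻¹·Q̇·Q⁻¹) *ᵥ η) ≤ −α·(η ⬝ᵥ (Q⁻¹ *ᵥ η)). -/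
/-!
Evaluate the quadratic form of `H` at the test vector
`z = (Q⁻¹η, ν⁻¹ δp, w, (γ²/ν) δq)`. In the coordinates `x = Q⁻¹η` one has `η = Q x` and
`K η = Y x`, so the `(4,1)` block turns into `δq` and the form equals
`V̇ + α V + λ_w (V - ‖w‖²) + (γ² ‖δq‖² - ‖δp‖²) / ν`.
It is `≤ 0` because `H ⪯ 0`, while the last two terms are `≥ 0` by the hypotheses on `w` and
`δp` (an S-procedure); hence `V̇ ≤ -α V`.
-/

open Matrix

namespace Matrix

variable {R : Type*} [CommRing R] {l m n o : Type*} [Fintype l] [Fintype m] [Fintype n]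
  [Fintype o]

theorem sumElim_dotProduct_fromBlocks_transpose_mulVec_sumElim (A : Matrix l l R)
    (B : Matrix l m R) (D : Matrix m m R) (x : l → R) (y : m → R) :
    Sum.elim x y ⬝ᵥ (fromBlocks A B Bᵀ D *ᵥ Sum.elim x y) =
      x ⬝ᵥ (A *ᵥ x) + 2 * (x ⬝ᵥ (B *ᵥ y)) + y ⬝ᵥ (D *ᵥ y) := by
  simp only [fromBlocks_mulVec, Sum.elim_comp_inl, Sum.elim_comp_inr,
    sumElim_dotProduct_sumElim, dotProduct_add, dotProduct_transpose_mulVec]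
  ring

theorem dotProduct_fromCols_mulVec_sumElim (B₁ : Matrix l m R) (B₂ : Matrix l n R)
    (x : l → R) (u : m → R) (v : n → R) :
    x ⬝ᵥ (fromCols B₁ B₂ *ᵥ Sum.elim u v) = x ⬝ᵥ (B₁ *ᵥ u) + x ⬝ᵥ (B₂ *ᵥ v) := by
  rw [fromCols_mulVec_sumElim, dotProduct_add]

theorem mulVec_nonsing_inv_mulVec {K : Type*} [Field K] [DecidableEq l] {A : Matrix l l K}
    (hA : IsUnit A) (v : l → K) : A *ᵥ (A⁻¹ *ᵥ v) = v := by
  rw [mulVec_mulVec, mul_nonsing_inv A ((isUnit_iff_isUnit_det A).mp hA), one_mulVec]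

theorem dotProduct_mulVec_of_isSymm {P : Matrix l l R} (hP : P.IsSymm) (x v : l → R) :
    x ⬝ᵥ (P *ᵥ v) = (P *ᵥ x) ⬝ᵥ v := by
  rw [dotProduct_mulVec, ← mulVec_transpose, hP.eq]

end Matrix

section

variable {R : Type*} [CommRing R] {l m n o : Type*} [Fintype l] [Fintype m] [Fintype n]
  [Fintype o] [DecidableEq m] [DecidableEq n] [DecidableEq o]

theorem sumElim_dotProduct_dlmi_mulVec_sumElim (P : Matrix l l R) (E : Matrix l m R)
    (F : Matrix l n R) (N : Matrix o l R) (G : Matrix o n R) (a b c : R)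
    (x : l → R) (d : m → R) (w : n → R) (s : o → R) :
    Sum.elim x (Sum.elim d (Sum.elim w s)) ⬝ᵥ
      (fromBlocks P (fromCols E (fromCols F Nᵀ)) (fromRows Eᵀ (fromRows Fᵀ N))
        (fromBlocks (a • 1) (fromCols 0 0) (fromRows 0 0) (fromBlocks (b • 1) Gᵀ G (c • 1))) *ᵥ
        Sum.elim x (Sum.elim d (Sum.elim w s))) =
      x ⬝ᵥ (P *ᵥ x) + 2 * (x ⬝ᵥ (E *ᵥ d) + x ⬝ᵥ (F *ᵥ w) + s ⬝ᵥ (N *ᵥ x) + s ⬝ᵥ (G *ᵥ w))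
        + a * (d ⬝ᵥ d) + b * (w ⬝ᵥ w) + c * (s ⬝ᵥ s) := by
  have hrows : fromRows Eᵀ (fromRows Fᵀ N) = (fromCols E (fromCols F Nᵀ))ᵀ := by
    simp only [transpose_fromCols, transpose_transpose]
  have hzero : fromRows (0 : Matrix n m R) (0 : Matrix o m R) = (fromCols 0 0)ᵀ := by
    simp only [fromCols_zero, fromRows_zero, transpose_zero]
  have hG : fromBlocks (b • 1) Gᵀ G (c • 1) = fromBlocks (b • 1) Gᵀ Gᵀᵀ (c • 1) := by
    rw [transpose_transpose]
  rw [hrows, hzero, hG, sumElim_dotProduct_fromBlocks_transpose_mulVec_sumElim,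
    sumElim_dotProduct_fromBlocks_transpose_mulVec_sumElim,
    sumElim_dotProduct_fromBlocks_transpose_mulVec_sumElim]
  simp only [dotProduct_fromCols_mulVec_sumElim, fromCols_zero, zero_mulVec, dotProduct_zero,
    dotProduct_transpose_mulVec, smul_mulVec, one_mulVec, dotProduct_smul,
    smul_eq_mul]
  ring

end

theorem two_mul_inv_smul_dotProduct_sub {K ι : Type*} [Field K] [Fintype ι] (c : K)
    (v : ι → K) :
    2 * ((c⁻¹ • v) ⬝ᵥ v) - c * ((c⁻¹ • v) ⬝ᵥ (c⁻¹ • v)) = c⁻¹ * (v ⬝ᵥ v) := by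
  rcases eq_or_ne c 0 with rfl | hc
  · simp
  · simp only [smul_dotProduct, dotProduct_smul, smul_eq_mul]
    field_simp
    ring

section

variable {n m p r q : Type*} [Fintype n] [Fintype m] [Fintype p] [Fintype r] [Fintype q]
  [DecidableEq n] [DecidableEq p] [DecidableEq r] [DecidableEq q]
  (A : Matrix n n ℝ) (B : Matrix n m ℝ) (E : Matrix n p ℝ) (F : Matrix n r ℝ)
  (C : Matrix q n ℝ) (D : Matrix q m ℝ) (G : Matrix q r ℝ) (Qd : Matrix n n ℝ) (Y : Matrix m n ℝ)
  (lam_w α γ : ℝ) {Q M : Matrix n n ℝ} {K : Matrix m n ℝ}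

theorem dlmi_topLeft_quadForm_eq (hQ : Q.PosDef)
    (hM : M = Q * Aᵀ + Yᵀ * Bᵀ + A * Q + B * Y + α • Q + lam_w • Q) (hK : K = Y * Q⁻¹)
    (η : n → ℝ) :
    (Q⁻¹ *ᵥ η) ⬝ᵥ (M *ᵥ (Q⁻¹ *ᵥ η)) =
      2 * ((Q⁻¹ *ᵥ η) ⬝ᵥ ((A + B * K) *ᵥ η)) + (α + lam_w) * (η ⬝ᵥ (Q⁻¹ *ᵥ η)) := by
  have hQsymm : Q.IsSymm := isHermitian_iff_isSymm.mp hQ.isHermitian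
  have hM' : M = (A * Q + B * Y)ᵀ + (A * Q + B * Y) + (α + lam_w) • Q := by
    rw [hM, transpose_add, transpose_mul, transpose_mul, hQsymm.eq, add_smul]
    abel
  set x := Q⁻¹ *ᵥ η
  have hη : Q *ᵥ x = η := mulVec_nonsing_inv_mulVec hQ.isUnit η
  have hSx : (A * Q + B * Y) *ᵥ x = (A + B * K) *ᵥ η := by
    rw [add_mulVec, add_mulVec, ← mulVec_mulVec, ← mulVec_mulVec, hη, hK, ← mulVec_mulVec,
      ← mulVec_mulVec]
  rw [hM', add_mulVec, add_mulVec, dotProduct_add, dotProduct_add, dotProduct_transpose_mulVec,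
    hSx, smul_mulVec, dotProduct_smul, hη, smul_eq_mul, dotProduct_comm η]
  ring

theorem dlmi_testVector_quadForm_eq (hQ : Q.PosDef) {ν : ℝ} (hν : ν ≠ 0)
    (hM : M = Q * Aᵀ + Yᵀ * Bᵀ + A * Q + B * Y + α • Q + lam_w • Q) (hK : K = Y * Q⁻¹)
    (η : n → ℝ) (w : r → ℝ) (δp : p → ℝ) :
    let δq := C *ᵥ η + D *ᵥ (K *ᵥ η) + G *ᵥ w
    let V := η ⬝ᵥ (Q⁻¹ *ᵥ η)
    let z := Sum.elim (Q⁻¹ *ᵥ η) (Sum.elim (ν⁻¹ • δp) (Sum.elim w ((ν / γ ^ 2)⁻¹ • δq)))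
    z ⬝ᵥ (fromBlocks (M - Qd)
        (fromCols (ν • E) (fromCols F (C * Q + D * Y)ᵀ))
        (fromRows (ν • E)ᵀ (fromRows Fᵀ (C * Q + D * Y)))
        (fromBlocks (-ν • 1) (fromCols 0 0) (fromRows 0 0)
          (fromBlocks (-lam_w • 1) Gᵀ G (-(ν / γ ^ 2) • 1))) *ᵥ z) =
      2 * (η ⬝ᵥ (Q⁻¹ *ᵥ ((A + B * K) *ᵥ η + F *ᵥ w + E *ᵥ δp)))
          - η ⬝ᵥ ((Q⁻¹ * Qd * Q⁻¹) *ᵥ η) + α * V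
        + lam_w * (V - w ⬝ᵥ w) + (γ ^ 2 * (δq ⬝ᵥ δq) - δp ⬝ᵥ δp) / ν := by
  intro δq V z
  have hQinv_symm : Q⁻¹.IsSymm := isHermitian_iff_isSymm.mp hQ.inv.isHermitian
  set x := Q⁻¹ *ᵥ η with hx
  have hQdx : η ⬝ᵥ ((Q⁻¹ * Qd * Q⁻¹) *ᵥ η) = x ⬝ᵥ (Qd *ᵥ x) := by
    rw [← mulVec_mulVec, ← mulVec_mulVec, dotProduct_mulVec_of_isSymm hQinv_symm]
  have hδq : (C * Q + D * Y) *ᵥ x + G *ᵥ w = δq := by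
    rw [add_mulVec, ← mulVec_mulVec, ← mulVec_mulVec, mulVec_nonsing_inv_mulVec hQ.isUnit]
    simp only [δq, hx, hK, ← mulVec_mulVec]
  have hs : ((ν / γ ^ 2)⁻¹ • δq) ⬝ᵥ ((C * Q + D * Y) *ᵥ x) + ((ν / γ ^ 2)⁻¹ • δq) ⬝ᵥ (G *ᵥ w)
      = ((ν / γ ^ 2)⁻¹ • δq) ⬝ᵥ δq := by
    rw [← dotProduct_add, hδq]
  have hEδp : x ⬝ᵥ ((ν • E) *ᵥ ν⁻¹ • δp) = x ⬝ᵥ (E *ᵥ δp) := by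
    rw [smul_mulVec, mulVec_smul, smul_smul, mul_inv_cancel₀ hν, one_smul]
  have hδp : -ν * ((ν⁻¹ • δp) ⬝ᵥ (ν⁻¹ • δp)) = -(ν⁻¹ * (δp ⬝ᵥ δp)) := by
    simp only [smul_dotProduct, dotProduct_smul, smul_eq_mul]
    field_simp
  have hcompl := two_mul_inv_smul_dotProduct_sub (ν / γ ^ 2) δq
  rw [sumElim_dotProduct_dlmi_mulVec_sumElim, dotProduct_mulVec_of_isSymm hQinv_symm, hQdx,
    sub_mulVec, dotProduct_sub, dlmi_topLeft_quadForm_eq A B Y lam_w α hQ hM hK, ← hx, hEδp, hδp,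
    dotProduct_add, dotProduct_add]
  linear_combination 2 * hs + hcompl + (δq ⬝ᵥ δq) * inv_div ν (γ ^ 2)

end

theorem thm1_dlmi_implies_lyapunov_general
    (n m p n_w q : ℕ)
    (A : Matrix (Fin n) (Fin n) ℝ) (B : Matrix (Fin n) (Fin m) ℝ)
    (E : Matrix (Fin n) (Fin p) ℝ) (F : Matrix (Fin n) (Fin n_w) ℝ)
    (C : Matrix (Fin q) (Fin n) ℝ) (D : Matrix (Fin q) (Fin m) ℝ)
    (G : Matrix (Fin q) (Fin n_w) ℝ)
    (Q Qd : Matrix (Fin n) (Fin n) ℝ) (hQ : Q.PosDef)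
    (Y : Matrix (Fin m) (Fin n) ℝ)
    (ν lam_w α γ : ℝ) (hν : 0 < ν) (hlamw : 0 < lam_w)
    (M : Matrix (Fin n) (Fin n) ℝ)
    (hM : M = Q * Aᵀ + Yᵀ * Bᵀ + A * Q + B * Y + α • Q + lam_w • Q)
    (K : Matrix (Fin m) (Fin n) ℝ) (hK : K = Y * Q⁻¹)
    (H : Matrix (Fin n ⊕ (Fin p ⊕ (Fin n_w ⊕ Fin q)))
               (Fin n ⊕ (Fin p ⊕ (Fin n_w ⊕ Fin q))) ℝ)
    (hH : H = Matrix.fromBlocks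
      (M - Qd)
      (Matrix.fromCols (ν • E) (Matrix.fromCols F (C * Q + D * Y)ᵀ))
      (Matrix.fromRows (ν • Eᵀ) (Matrix.fromRows Fᵀ (C * Q + D * Y)))
      (Matrix.fromBlocks
        (-ν • (1 : Matrix (Fin p) (Fin p) ℝ))
        (Matrix.fromCols (0 : Matrix (Fin p) (Fin n_w) ℝ)
                            (0 : Matrix (Fin p) (Fin q) ℝ))
        (Matrix.fromRows (0 : Matrix (Fin n_w) (Fin p) ℝ)
                         (0 : Matrix (Fin q) (Fin p) ℝ))
        (Matrix.fromBlocks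
          (-lam_w • (1 : Matrix (Fin n_w) (Fin n_w) ℝ)) Gᵀ
          G (-(ν / γ ^ 2) • (1 : Matrix (Fin q) (Fin q) ℝ)))))
    (hNSD : (-H).PosSemidef) :
    ∀ (η : Fin n → ℝ) (w : Fin n_w → ℝ) (δp : Fin p → ℝ),
      Real.sqrt (δp ⬝ᵥ δp) ≤
        γ * Real.sqrt ((C *ᵥ η + D *ᵥ (K *ᵥ η) + G *ᵥ w) ⬝ᵥ
                       (C *ᵥ η + D *ᵥ (K *ᵥ η) + G *ᵥ w)) →
      η ⬝ᵥ (Q⁻¹ *ᵥ η) ≥ w ⬝ᵥ w →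
      2 * (η ⬝ᵥ (Q⁻¹ *ᵥ ((A + B * K) *ᵥ η + F *ᵥ w + E *ᵥ δp)))
          - η ⬝ᵥ ((Q⁻¹ * Qd * Q⁻¹) *ᵥ η)
        ≤ -α * (η ⬝ᵥ (Q⁻¹ *ᵥ η)) := by
  intro η w δp hsector hV
  set δq := C *ᵥ η + D *ᵥ (K *ᵥ η) + G *ᵥ w
  have hform := hNSD.dotProduct_mulVec_nonneg
    (Sum.elim (Q⁻¹ *ᵥ η) (Sum.elim (ν⁻¹ • δp) (Sum.elim w ((ν / γ ^ 2)⁻¹ • δq))))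
  rw [star_trivial, neg_mulVec, dotProduct_neg, neg_nonneg, hH, ← transpose_smul,
    dlmi_testVector_quadForm_eq A B E F C D G Qd Y lam_w α γ hQ hν.ne' hM hK] at hform
  have hsector_sq : δp ⬝ᵥ δp ≤ γ ^ 2 * (δq ⬝ᵥ δq) := by
    have hδq : 0 ≤ δq ⬝ᵥ δq := by simpa using dotProduct_star_self_nonneg δq
    simpa [mul_pow, Real.sq_sqrt hδq] using (Real.sqrt_le_iff.mp hsector).2
  have hw_nonneg : 0 ≤ lam_w * (η ⬝ᵥ (Q⁻¹ *ᵥ η) - w ⬝ᵥ w) := mul_nonneg hlamw.le (sub_nonneg.2 hV)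
  have hδ_nonneg : 0 ≤ (γ ^ 2 * (δq ⬝ᵥ δq) - δp ⬝ᵥ δp) / ν := div_nonneg (sub_nonneg.2 hsector_sq) hν.le
  linarith

/-- Theorem 1, pointwise algebraic form: feasibility of the DLMI `H ⪯ 0`
(with `K = Y Q⁻¹`) implies the Lyapunov decrease condition
`V̇ = 2 ηᵀQ⁻¹((A+BK)η + Fw + E δp) − ηᵀQ⁻¹Q̇Q⁻¹η ≤ −α ηᵀQ⁻¹η`
for all admissible `δp` (with `‖δp‖₂ ≤ γ‖δq‖₂`) whenever `ηᵀQ⁻¹η ≥ ‖w‖₂²`. -/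
theorem thm1_dlmi_implies_lyapunov
    (n m p n_w q : ℕ) (hn : 0 < n) (hm : 0 < m) (hp : 0 < p)
    (hnw : 0 < n_w) (hq : 0 < q)
    (A : Matrix (Fin n) (Fin n) ℝ) (B : Matrix (Fin n) (Fin m) ℝ)
    (E : Matrix (Fin n) (Fin p) ℝ) (F : Matrix (Fin n) (Fin n_w) ℝ)
    (C : Matrix (Fin q) (Fin n) ℝ) (D : Matrix (Fin q) (Fin m) ℝ)
    (G : Matrix (Fin q) (Fin n_w) ℝ)
    (Q Qd : Matrix (Fin n) (Fin n) ℝ) (hQ : Q.PosDef) (hQd : Qd.IsSymm)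
    (Y : Matrix (Fin m) (Fin n) ℝ)
    (ν lam_w α γ : ℝ) (hν : 0 < ν) (hlamw : 0 < lam_w) (hα : 0 < α) (hγ : 0 < γ)
    (M : Matrix (Fin n) (Fin n) ℝ)
    (hM : M = Q * Aᵀ + Yᵀ * Bᵀ + A * Q + B * Y + α • Q + lam_w • Q)
    (K : Matrix (Fin m) (Fin n) ℝ) (hK : K = Y * Q⁻¹)
    (H : Matrix (Fin n ⊕ (Fin p ⊕ (Fin n_w ⊕ Fin q)))
               (Fin n ⊕ (Fin p ⊕ (Fin n_w ⊕ Fin q))) ℝ)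
    (hH : H = Matrix.fromBlocks
      (M - Qd)
      (Matrix.fromCols (ν • E) (Matrix.fromCols F (C * Q + D * Y)ᵀ))
      (Matrix.fromRows (ν • Eᵀ) (Matrix.fromRows Fᵀ (C * Q + D * Y)))
      (Matrix.fromBlocks
        (-ν • (1 : Matrix (Fin p) (Fin p) ℝ))
        (Matrix.fromCols (0 : Matrix (Fin p) (Fin n_w) ℝ)
                            (0 : Matrix (Fin p) (Fin q) ℝ))
        (Matrix.fromRows (0 : Matrix (Fin n_w) (Fin p) ℝ)
                         (0 : Matrix (Fin q) (Fin p) ℝ))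
        (Matrix.fromBlocks
          (-lam_w • (1 : Matrix (Fin n_w) (Fin n_w) ℝ)) Gᵀ
          G (-(ν / γ ^ 2) • (1 : Matrix (Fin q) (Fin q) ℝ)))))
    (hNSD : (-H).PosSemidef) :
    ∀ (η : Fin n → ℝ) (w : Fin n_w → ℝ) (δp : Fin p → ℝ),
      Real.sqrt (δp ⬝ᵥ δp) ≤
        γ * Real.sqrt ((C *ᵥ η + D *ᵥ (K *ᵥ η) + G *ᵥ w) ⬝ᵥ
                       (C *ᵥ η + D *ᵥ (K *ᵥ η) + G *ᵥ w)) →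
      η ⬝ᵥ (Q⁻¹ *ᵥ η) ≥ w ⬝ᵥ w →
      2 * (η ⬝ᵥ (Q⁻¹ *ᵥ ((A + B * K) *ᵥ η + F *ᵥ w + E *ᵥ δp)))
          - η ⬝ᵥ ((Q⁻¹ * Qd * Q⁻¹) *ᵥ η)
        ≤ -α * (η ⬝ᵥ (Q⁻¹ *ᵥ η)) :=
  thm1_dlmi_implies_lyapunov_general n m p n_w q A B E F C D G Q Qd hQ Y ν lam_w α γ hν hlamw M hM K
    hK H hH hNSD
end

section
/- (Proposition 1, single-interval form.) Let α > 0 and let t₀ ≤ a < b be real numbers. Let c₀, c_a, c_b be reals with 0 < c₀ ≤ 1, 0 < c_a ≤ 1, 0 < c_b ≤ 1, and suppose e^{-α(a-t₀)}·c_a ≤ c₀ and e^{-α(b-t₀)}·c_b ≤ c₀. For t ∈ [a, b] define λm(t) := (b - t)/(b - a), λp(t) := (t - a)/(b - a), and c(t) := (c_a·c_b)/(λm(t)·c_b + λp(t)·c_a). Then for every t ∈ [a, b], 1/c(t) ≥ max{ 1, e^{-α(t-t₀)}/c₀ }. -/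
/-!
By construction `1/c` is affine on `[a, b]`, i.e. the chord between the node values `1/c_a` and
`1/c_b`, while the required lower bound `t ↦ max 1 (exp (-α (t - t₀)) / c₀)` is convex, being the
maximum of a constant and an exponential. The node conditions say exactly that the chord lies above
this convex function at both endpoints, so it does so on the whole interval.
-/

open Real Set

lemma one_div_div_mul_add_mul_eq {x y : ℝ} (hx : x ≠ 0) (hy : y ≠ 0) (μ ν : ℝ) :
    1 / (x * y / (μ * y + ν * x)) = μ / x + ν / y := by
  rw [one_div_div]
  field_simp

lemma convexOn_exp_mul_sub_div (k s₀ : ℝ) {C : ℝ} (hC : 0 ≤ C) :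
    ConvexOn ℝ univ fun s => exp (k * (s - s₀)) / C := by
  refine ⟨convex_univ, fun x _ y _ μ ν hμ hν hμν => ?_⟩
  have hlin : k * (μ * x + ν * y - s₀) = μ * (k * (x - s₀)) + ν * (k * (y - s₀)) := by
    linear_combination k * s₀ * hμν
  have hexp := convexOn_exp.2 (mem_univ (k * (x - s₀))) (mem_univ (k * (y - s₀))) hμ hν hμν
  simp only [smul_eq_mul] at hexp ⊢
  rw [hlin]
  calc exp (μ * (k * (x - s₀)) + ν * (k * (y - s₀))) / C
      ≤ (μ * exp (k * (x - s₀)) + ν * exp (k * (y - s₀))) / C := by gcongr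
    _ = _ := by ring

lemma ConvexOn.le_chord_of_le {s : Set ℝ} {f : ℝ → ℝ} (hf : ConvexOn ℝ s f) {a b t u v : ℝ}
    (ha : a ∈ s) (hb : b ∈ s) (hab : a < b) (ht : t ∈ Icc a b) (hu : f a ≤ u) (hv : f b ≤ v) :
    f t ≤ (b - t) / (b - a) * u + (t - a) / (b - a) * v := by
  have hba : 0 < b - a := sub_pos.2 hab
  have hμ : 0 ≤ (b - t) / (b - a) := div_nonneg (by linarith [ht.2]) hba.le
  have hν : 0 ≤ (t - a) / (b - a) := div_nonneg (by linarith [ht.1]) hba.le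
  have hμν : (b - t) / (b - a) + (t - a) / (b - a) = 1 := by field_simp; ring
  have htab : (b - t) / (b - a) * a + (t - a) / (b - a) * b = t := by
    field_simp; ring
  calc f t = f ((b - t) / (b - a) * a + (t - a) / (b - a) * b) := by rw [htab]
    _ ≤ (b - t) / (b - a) * f a + (t - a) / (b - a) * f b := hf.2 ha hb hμ hν hμν
    _ ≤ _ := by gcongr

lemma max_one_div_le_one_div_of_le {c c₀ E : ℝ} (hc : 0 < c) (hc1 : c ≤ 1) (hc₀ : 0 < c₀)
    (hE : E * c ≤ c₀) : max 1 (E / c₀) ≤ 1 / c :=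
  max_le (by rwa [le_div_iff₀ hc, one_mul])
    (by rw [div_le_div_iff₀ hc₀ hc, one_mul]; exact hE)

theorem prop1_single_interval_general
    (α t₀ a b : ℝ) (hab : a < b)
    (c₀ c_a c_b : ℝ)
    (hc₀ : 0 < c₀)
    (hca : 0 < c_a) (hca1 : c_a ≤ 1)
    (hcb : 0 < c_b) (hcb1 : c_b ≤ 1)
    (hea : Real.exp (-α * (a - t₀)) * c_a ≤ c₀)
    (heb : Real.exp (-α * (b - t₀)) * c_b ≤ c₀)
    (lm lp c : ℝ → ℝ)
    (hlm : ∀ t, lm t = (b - t) / (b - a))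
    (hlp : ∀ t, lp t = (t - a) / (b - a))
    (hc : ∀ t, c t = (c_a * c_b) / (lm t * c_b + lp t * c_a)) :
    ∀ t ∈ Set.Icc a b,
      1 / c t ≥ max 1 (Real.exp (-α * (t - t₀)) / c₀) := by
  intro t ht
  have hbound : ConvexOn ℝ univ fun s => max 1 (exp (-α * (s - t₀)) / c₀) :=
    (convexOn_const 1 convex_univ).sup (convexOn_exp_mul_sub_div (-α) t₀ hc₀.le)
  have hchord := hbound.le_chord_of_le (mem_univ a) (mem_univ b) hab ht
    (max_one_div_le_one_div_of_le hca hca1 hc₀ hea)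
    (max_one_div_le_one_div_of_le hcb hcb1 hc₀ heb)
  rw [hc, one_div_div_mul_add_mul_eq hca.ne' hcb.ne', hlm, hlp]
  simpa only [mul_one_div] using hchord

/-- Proposition 1, single-interval form: the piecewise-linear-in-`1/c`
interpolation satisfies the continuous-time support condition
`1/c(t) ≥ max {1, exp(-α(t-t₀))/c₀}` on `[a, b]`. -/
theorem prop1_single_interval
    (α t₀ a b : ℝ) (hα : 0 < α) (h₀a : t₀ ≤ a) (hab : a < b)
    (c₀ c_a c_b : ℝ)
    (hc₀ : 0 < c₀) (hc₀1 : c₀ ≤ 1)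
    (hca : 0 < c_a) (hca1 : c_a ≤ 1)
    (hcb : 0 < c_b) (hcb1 : c_b ≤ 1)
    (hea : Real.exp (-α * (a - t₀)) * c_a ≤ c₀)
    (heb : Real.exp (-α * (b - t₀)) * c_b ≤ c₀)
    (lm lp c : ℝ → ℝ)
    (hlm : ∀ t, lm t = (b - t) / (b - a))
    (hlp : ∀ t, lp t = (t - a) / (b - a))
    (hc : ∀ t, c t = (c_a * c_b) / (lm t * c_b + lp t * c_a)) :
    ∀ t ∈ Set.Icc a b,
      1 / c t ≥ max 1 (Real.exp (-α * (t - t₀)) / c₀) :=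
  prop1_single_interval_general α t₀ a b hab c₀ c_a c_b hc₀ hca hca1 hcb hcb1 hea heb lm lp c hlm
    hlp hc
end

section
/- Let n be a positive natural, let Q : Matrix (Fin n) (Fin n) ℝ be symmetric positive definite, let c > 0 be real, and let a, x̄ : Fin n → ℝ and b : ℝ. Then the following are equivalent: (i) for every η : Fin n → ℝ with η ⬝ᵥ (Q⁻¹ *ᵥ η) ≤ 1/c, one has a ⬝ᵥ (x̄ + η) ≤ b; (ii) ‖S *ᵥ a‖ ≤ b − a ⬝ᵥ x̄, where S is the positive semidefinite square root of the matrix (1/c)·Q and ‖·‖ denotes the Euclidean norm √(v ⬝ᵥ v). -/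
/-!
Since `S` is a symmetric square root of `Q / c`, the substitution `η = S w` carries the unit ball
onto the ellipsoid `{η | ηᵀ Q⁻¹ η ≤ 1 / c}`, and `aᵀ(x̄ + S w) = aᵀx̄ + (S a)ᵀ w`. The containment
therefore says that the linear functional `w ↦ (S a)ᵀ w` is bounded by `b - aᵀx̄` on the unit ball,
and its maximum there is `‖S a‖` (Cauchy–Schwarz, attained at `S a / ‖S a‖`).
-/

open Matrix

theorem dotProduct_le_sqrt_mul_sqrt {ι : Type*} [Fintype ι] (v w : ι → ℝ) :
    v ⬝ᵥ w ≤ √(v ⬝ᵥ v) * √(w ⬝ᵥ w) := by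
  simpa [dotProduct, sq] using Real.sum_mul_le_sqrt_mul_sqrt Finset.univ v w

theorem forall_dotProduct_le_iff_sqrt_le {ι : Type*} [Fintype ι] (v : ι → ℝ) (t : ℝ) :
    (∀ w : ι → ℝ, w ⬝ᵥ w ≤ 1 → v ⬝ᵥ w ≤ t) ↔ √(v ⬝ᵥ v) ≤ t := by
  refine ⟨fun h => ?_, fun h w hw => ?_⟩
  · set r := √(v ⬝ᵥ v)
    rcases eq_or_ne r 0 with hr | hr
    · simpa [hr] using h 0 (by simp)
    have hvv : v ⬝ᵥ v = r * r :=
      (Real.mul_self_sqrt (by simpa using dotProduct_self_star_nonneg v)).symm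
    have hunit : (r⁻¹ • v) ⬝ᵥ (r⁻¹ • v) = 1 := by
      rw [smul_dotProduct, dotProduct_smul, hvv, smul_eq_mul, smul_eq_mul]
      field_simp
    calc r = v ⬝ᵥ (r⁻¹ • v) := by rw [dotProduct_smul, hvv, smul_eq_mul]; field_simp
      _ ≤ t := h _ hunit.le
  · calc v ⬝ᵥ w ≤ √(v ⬝ᵥ v) * √(w ⬝ᵥ w) := dotProduct_le_sqrt_mul_sqrt v w
      _ ≤ √(v ⬝ᵥ v) * 1 := by gcongr; exact Real.sqrt_le_one.mpr hw
      _ ≤ t := by rwa [mul_one]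

namespace Matrix.IsSymm

variable {ι R : Type*} [Fintype ι]

theorem mulVec_dotProduct [CommSemiring R] {S : Matrix ι ι R} (hS : S.IsSymm) (v w : ι → R) :
    (S *ᵥ v) ⬝ᵥ w = v ⬝ᵥ (S *ᵥ w) := by
  rw [dotProduct_mulVec, ← hS.eq, vecMul_transpose, hS.eq, dotProduct_comm]

theorem dotProduct_inv_mul_self_mulVec [DecidableEq ι] [CommRing R] {S : Matrix ι ι R}
    (hS : S.IsSymm) (v : ι → R) :
    v ⬝ᵥ ((S * S)⁻¹ *ᵥ v) = (S⁻¹ *ᵥ v) ⬝ᵥ (S⁻¹ *ᵥ v) := by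
  have hSinv : S⁻¹.IsSymm := by rw [IsSymm, transpose_nonsing_inv, hS.eq]
  rw [Matrix.mul_inv_rev, ← mulVec_mulVec, hSinv.mulVec_dotProduct]

end Matrix.IsSymm

theorem funnel_halfspace_containment_general
    (n : ℕ)
    (Q : Matrix (Fin n) (Fin n) ℝ) (hQ : Q.PosDef)
    (c : ℝ) (hc : 0 < c)
    (a xbar : Fin n → ℝ) (b : ℝ)
    (S : Matrix (Fin n) (Fin n) ℝ) (hS : S.PosSemidef)
    (hS2 : S * S = c⁻¹ • Q) :
    (∀ η : Fin n → ℝ, η ⬝ᵥ (Q⁻¹ *ᵥ η) ≤ 1 / c → a ⬝ᵥ (xbar + η) ≤ b) ↔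
      Real.sqrt ((S *ᵥ a) ⬝ᵥ (S *ᵥ a)) ≤ b - a ⬝ᵥ xbar := by
  have hSsymm : S.IsSymm := isHermitian_iff_isSymm.1 hS.isHermitian
  have hSS : IsUnit (S * S) := hS2 ▸ hQ.isUnit.smul (Units.mk0 c⁻¹ (by positivity))
  have hSunit : IsUnit S := isUnit_mul_self_iff.1 hSS
  have hQinv : Q⁻¹ = c⁻¹ • (S * S)⁻¹ := by
    have hQ_eq : Q = c • (S * S) := by rw [hS2, smul_smul, mul_inv_cancel₀ hc.ne', one_smul]
    rw [hQ_eq]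
    exact inv_smul' (S * S) (Units.mk0 c hc.ne') ((isUnit_iff_isUnit_det _).1 hSS)
  have hquad (w : Fin n → ℝ) : (S *ᵥ w) ⬝ᵥ (Q⁻¹ *ᵥ (S *ᵥ w)) ≤ 1 / c ↔ w ⬝ᵥ w ≤ 1 := by
    rw [hQinv, smul_mulVec, dotProduct_smul, hSsymm.dotProduct_inv_mul_self_mulVec, mulVec_mulVec,
      nonsing_inv_mul _ ((isUnit_iff_isUnit_det S).1 hSunit), one_mulVec, smul_eq_mul,
      ← div_eq_inv_mul, div_le_div_iff_of_pos_right hc]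
  have hlin (w : Fin n → ℝ) : a ⬝ᵥ (xbar + S *ᵥ w) ≤ b ↔ (S *ᵥ a) ⬝ᵥ w ≤ b - a ⬝ᵥ xbar := by
    rw [dotProduct_add, hSsymm.mulVec_dotProduct, le_sub_iff_add_le']
  rw [← forall_dotProduct_le_iff_sqrt_le, (mulVec_surjective_iff_isUnit.2 hSunit).forall]
  exact forall_congr' fun w => by rw [hquad, hlin]

/-- Containment of the translated ellipsoid `{xbar} ⊕ E_c` (with
`E_c = {η : ηᵀQ⁻¹η ≤ 1/c}`) in the halfspace `{x : aᵀx ≤ b}` is equivalent to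
the support-function inequality `‖(Q/c)^{1/2} a‖₂ ≤ b − aᵀxbar`. -/
theorem funnel_halfspace_containment
    (n : ℕ) (hn : 0 < n)
    (Q : Matrix (Fin n) (Fin n) ℝ) (hQ : Q.PosDef)
    (c : ℝ) (hc : 0 < c)
    (a xbar : Fin n → ℝ) (b : ℝ)
    (S : Matrix (Fin n) (Fin n) ℝ) (hS : S.PosSemidef)
    (hS2 : S * S = c⁻¹ • Q) :
    (∀ η : Fin n → ℝ, η ⬝ᵥ (Q⁻¹ *ᵥ η) ≤ 1 / c → a ⬝ᵥ (xbar + η) ≤ b) ↔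
      Real.sqrt ((S *ᵥ a) ⬝ᵥ (S *ᵥ a)) ≤ b - a ⬝ᵥ xbar :=
  funnel_halfspace_containment_general n Q hQ c hc a xbar b S hS hS2
end

section
/- Let n be a positive natural, let Q : Matrix (Fin n) (Fin n) ℝ be symmetric positive definite, let c > 0 and r ≥ 0 be reals, and let a : Fin n → ℝ. Let S be the positive semidefinite square root of (1/c)·Q. Then ‖S *ᵥ a‖ ≤ r if and only if the (1+n)×(1+n) symmetric block matrix with top-left 1×1 block r²·c, top-right 1×n block (Q *ᵥ a)ᵀ, bottom-left n×1 block Q *ᵥ a, and bottom-right n×n block Q, is positive semidefinite. -/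
/-!
Since `S` is symmetric with `S * S = c⁻¹ • Q`, we have `‖S a‖² = c⁻¹ aᵀQa`, so the inequality is
`aᵀQa ≤ r²c`. As `Q` is positive definite, the block matrix is positive semidefinite iff its Schur
complement `r²c - (Qa)ᵀQ⁻¹(Qa) = r²c - aᵀQa` is nonnegative.
-/

open Matrix

namespace Matrix

lemma posSemidef_iff_of_unique {ι R : Type*} [Unique ι] [Ring R] [PartialOrder R] [StarRing R]
    [StarOrderedRing R] (M : Matrix ι ι R) : M.PosSemidef ↔ 0 ≤ M default default := by
  have hM : M = diagonal fun _ => M default default := by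
    ext i j
    simp [Unique.eq_default i, Unique.eq_default j]
  rw [hM, posSemidef_diagonal_iff, Unique.forall_iff, diagonal_apply_eq]

lemma mulVec_dotProduct_mulVec_of_isSymm {n R : Type*} [Fintype n] [CommSemiring R]
    {S : Matrix n n R} (hS : S.IsSymm) (v : n → R) :
    (S *ᵥ v) ⬝ᵥ (S *ᵥ v) = v ⬝ᵥ (S * S) *ᵥ v := by
  rw [dotProduct_mulVec, ← mulVec_transpose, hS.eq, mulVec_mulVec, dotProduct_comm]

lemma posSemidef_fromBlocks_bordered_iff {ι n : Type*} [Unique ι] [Fintype n] [DecidableEq n]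
    {D : Matrix n n ℝ} (hD : D.PosDef) (d : ℝ) (v : n → ℝ) :
    (fromBlocks (of fun (_ : ι) (_ : ι) => d) (of fun _ j => v j) (of fun i _ => v i) D).PosSemidef
      ↔ v ⬝ᵥ D⁻¹ *ᵥ v ≤ d := by
  have := hD.isUnit.invertible
  change (fromBlocks _ (replicateRow ι v) (replicateCol ι v) D).PosSemidef ↔ _
  have hcol : replicateCol ι v = (replicateRow ι v)ᴴ := by
    rw [conjTranspose_replicateRow, star_trivial]
  rw [hcol, PosDef.fromBlocks₂₂ _ _ hD, posSemidef_iff_of_unique, sub_apply, sub_nonneg, of_apply,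
    conjTranspose_replicateRow, star_trivial, ← replicateRow_vecMul,
    replicateRow_mul_replicateCol_apply, dotProduct_mulVec]

end Matrix

theorem state_funnel_lmi_general
    (n : ℕ)
    (Q : Matrix (Fin n) (Fin n) ℝ) (hQ : Q.PosDef)
    (c r : ℝ) (hc : 0 < c) (hr : 0 ≤ r)
    (a : Fin n → ℝ)
    (S : Matrix (Fin n) (Fin n) ℝ) (hS : S.PosSemidef)
    (hS2 : S * S = c⁻¹ • Q) :
    Real.sqrt ((S *ᵥ a) ⬝ᵥ (S *ᵥ a)) ≤ r ↔
      (Matrix.fromBlocks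
        (Matrix.of fun (_ : Fin 1) (_ : Fin 1) => r ^ 2 * c)
        (Matrix.of fun (_ : Fin 1) (j : Fin n) => (Q *ᵥ a) j)
        (Matrix.of fun (i : Fin n) (_ : Fin 1) => (Q *ᵥ a) i)
        Q).PosSemidef := by
  have := hQ.isUnit.invertible
  have hS_symm : S.IsSymm := isHermitian_iff_isSymm.mp hS.isHermitian
  rw [posSemidef_fromBlocks_bordered_iff hQ, Real.sqrt_le_left hr,
    mulVec_dotProduct_mulVec_of_isSymm hS_symm, hS2, smul_mulVec, dotProduct_smul, smul_eq_mul,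
    inv_mul_le_iff₀ hc, mulVec_mulVec, inv_mul_of_invertible, one_mulVec, dotProduct_comm,
    mul_comm]

/-- Equivalence (via squaring and Schur complement) between the state-funnel
feasibility inequality `‖(Q/c)^{1/2} a‖₂ ≤ r` and positive semidefiniteness of
the block matrix `[[r²c, aᵀQ], [Qa, Q]]`. -/
theorem state_funnel_lmi
    (n : ℕ) (hn : 0 < n)
    (Q : Matrix (Fin n) (Fin n) ℝ) (hQ : Q.PosDef)
    (c r : ℝ) (hc : 0 < c) (hr : 0 ≤ r)
    (a : Fin n → ℝ)
    (S : Matrix (Fin n) (Fin n) ℝ) (hS : S.PosSemidef)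
    (hS2 : S * S = c⁻¹ • Q) :
    Real.sqrt ((S *ᵥ a) ⬝ᵥ (S *ᵥ a)) ≤ r ↔
      (Matrix.fromBlocks
        (Matrix.of fun (_ : Fin 1) (_ : Fin 1) => r ^ 2 * c)
        (Matrix.of fun (_ : Fin 1) (j : Fin n) => (Q *ᵥ a) j)
        (Matrix.of fun (i : Fin n) (_ : Fin 1) => (Q *ᵥ a) i)
        Q).PosSemidef :=
  state_funnel_lmi_general n Q hQ c r hc hr a S hS hS2
end

section
/- Let n, m be positive naturals, let Q : Matrix (Fin n) (Fin n) ℝ be symmetric positive definite, let Y : Matrix (Fin m) (Fin n) ℝ, let c > 0 and r ≥ 0 be reals, and let a : Fin m → ℝ. Set K := Y·Q⁻¹ and let S be the positive semidefinite square root of the positive semidefinite matrix K·((1/c)·Q)·Kᵀ. Then ‖S *ᵥ a‖ ≤ r if and only if the (1+n)×(1+n) symmetric block matrix with top-left 1×1 block r²·c, top-right 1×n block the row vector aᵀY (entries (aᵀY)_j = Σ_i a_i Y_{ij}), bottom-left n×1 block the column vector Yᵀa, and bottom-right n×n block Q, is positive semidefinite. -/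
open Matrix

lemma posSemidef_fin1_iff (M : Matrix (Fin 1) (Fin 1) ℝ) :
    M.PosSemidef ↔ 0 ≤ M 0 0 := by
  constructor
  · intro h
    simpa [dotProduct, mulVec] using (posSemidef_iff_dotProduct_mulVec.mp h).2 (fun _ => 1)
  · intro h
    refine posSemidef_iff_dotProduct_mulVec.mpr ⟨?_, fun x => ?_⟩
    · ext i j
      fin_cases i; fin_cases j
      simp [conjTranspose_apply]
    · have : (star x) ⬝ᵥ (M *ᵥ x) = M 0 0 * (x 0) ^ 2 := by
        simp [dotProduct, mulVec]
        ring
      rw [this]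
      positivity

/-- Equivalence (via squaring and Schur complement) between the input-funnel
feasibility inequality `‖(K(Q/c)Kᵀ)^{1/2} a‖₂ ≤ r` (with `K = YQ⁻¹`) and
positive semidefiniteness of the block matrix `[[r²c, aᵀY], [Yᵀa, Q]]`. -/
theorem input_funnel_lmi
    (n m : ℕ) (hn : 0 < n) (hm : 0 < m)
    (Q : Matrix (Fin n) (Fin n) ℝ) (hQ : Q.PosDef)
    (Y : Matrix (Fin m) (Fin n) ℝ)
    (c r : ℝ) (hc : 0 < c) (hr : 0 ≤ r)
    (a : Fin m → ℝ)
    (K : Matrix (Fin m) (Fin n) ℝ) (hK : K = Y * Q⁻¹)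
    (S : Matrix (Fin m) (Fin m) ℝ) (hS : S.PosSemidef)
    (hS2 : S * S = K * (c⁻¹ • Q) * Kᵀ) :
    Real.sqrt ((S *ᵥ a) ⬝ᵥ (S *ᵥ a)) ≤ r ↔
      (Matrix.fromBlocks
        (Matrix.of fun (_ : Fin 1) (_ : Fin 1) => r ^ 2 * c)
        (Matrix.of fun (_ : Fin 1) (j : Fin n) => (Yᵀ *ᵥ a) j)
        (Matrix.of fun (i : Fin n) (_ : Fin 1) => (Yᵀ *ᵥ a) i)
        Q).PosSemidef := by
  haveI : Invertible Q := hQ.isUnit.invertible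
  set b : Fin n → ℝ := Yᵀ *ᵥ a with hb
  set q : ℝ := b ⬝ᵥ (Q⁻¹ *ᵥ b) with hq
  -- transpose of Q⁻¹
  have hQsymm : Qᵀ = Q := hQ.isHermitian.eq
  have hQinvSymm : Q⁻¹ᵀ = Q⁻¹ := by
    rw [transpose_nonsing_inv, hQsymm]
  -- Step 1: (S *ᵥ a) ⬝ᵥ (S *ᵥ a) = c⁻¹ * q
  have hSsymm : Sᵀ = S := hS.isHermitian.eq
  have key : (S *ᵥ a) ⬝ᵥ (S *ᵥ a) = c⁻¹ * q := by
    have h1 : (S *ᵥ a) ⬝ᵥ (S *ᵥ a) = a ⬝ᵥ ((S * S) *ᵥ a) := by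
      rw [← mulVec_mulVec, dotProduct_mulVec, ← mulVec_transpose, hSsymm, dotProduct_comm]
    have h2 : S * S = c⁻¹ • (Y * Q⁻¹ * Yᵀ) := by
      rw [hS2, hK, transpose_mul, hQinvSymm]
      have : Y * Q⁻¹ * (c⁻¹ • Q) * (Q⁻¹ * Yᵀ)
          = c⁻¹ • (Y * (Q⁻¹ * Q * Q⁻¹) * Yᵀ) := by
        simp only [Matrix.mul_smul, Matrix.smul_mul, Matrix.mul_assoc]
      rw [this, nonsing_inv_mul Q (isUnit_det_of_invertible Q), Matrix.one_mul]
    rw [h1, h2]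
    have h3 : (c⁻¹ • (Y * Q⁻¹ * Yᵀ)) *ᵥ a = c⁻¹ • ((Y * Q⁻¹ * Yᵀ) *ᵥ a) := by
      simp [smul_mulVec]
    rw [h3, dotProduct_smul, smul_eq_mul]
    congr 1
    rw [hq, hb, ← mulVec_mulVec, ← mulVec_mulVec, dotProduct_mulVec, ← mulVec_transpose]
  -- Step 2: both sides iff q ≤ r^2 * c
  have hqnn : 0 ≤ (S *ᵥ a) ⬝ᵥ (S *ᵥ a) :=
    Finset.sum_nonneg fun i _ => mul_self_nonneg ((S *ᵥ a) i)
  have lhs_iff : Real.sqrt ((S *ᵥ a) ⬝ᵥ (S *ᵥ a)) ≤ r ↔ q ≤ r ^ 2 * c := by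
    conv_lhs => rw [show r = Real.sqrt (r ^ 2) from (Real.sqrt_sq hr).symm]
    rw [Real.sqrt_le_sqrt_iff (sq_nonneg r), key, inv_mul_le_iff₀ hc, mul_comm c (r ^ 2)]
  -- Step 3: the RHS via Schur complement
  set A : Matrix (Fin 1) (Fin 1) ℝ := Matrix.of fun _ _ => r ^ 2 * c
  set B : Matrix (Fin 1) (Fin n) ℝ := Matrix.of fun _ j => b j
  have hC : (Matrix.of fun (i : Fin n) (_ : Fin 1) => b i) = Bᴴ := by
    ext i j
    simp [B, conjTranspose_apply]
  rw [lhs_iff, hC, PosDef.fromBlocks₂₂ A B hQ, posSemidef_fin1_iff]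
  have hentry : (A - B * Q⁻¹ * Bᴴ) 0 0 = r ^ 2 * c - q := by
    simp only [A, B, Matrix.sub_apply, mul_apply, conjTranspose_apply, of_apply, hq, dotProduct,
      mulVec, star_trivial, Finset.sum_mul, Finset.mul_sum]
    congr 1
    rw [Finset.sum_comm]
    apply Finset.sum_congr rfl
    intro i _
    apply Finset.sum_congr rfl
    intro j _
    ring
  rw [hentry]
  constructor <;> intro h <;> linarith
end

section
/- Let n, m be positive naturals, let Q : Matrix (Fin n) (Fin n) ℝ be symmetric positive definite, let K : Matrix (Fin m) (Fin n) ℝ, and let c > 0. For every η : Fin n → ℝ with η ⬝ᵥ (Q⁻¹ *ᵥ η) ≤ 1/c, there exists y : Fin m → ℝ with ‖y‖ ≤ 1/√c such that K *ᵥ η = T *ᵥ y, where T is the positive semidefinite square root of the positive semidefinite matrix K·Q·Kᵀ. -/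
/-!
Factor `Q = S Sᵀ` with `S` invertible. Then `z = S⁻¹ η` satisfies `‖z‖² = ηᵀ Q⁻¹ η ≤ 1/c` and
`K η = (K S) z`, while `T Tᵀ = T² = (K S)(K S)ᵀ`. Two matrices with the same Gram matrix `M Mᵀ`
have the same range as it, so `M z = T Tᵀ w` for some `w`, and `y = Tᵀ w` solves `T y = M z` with
`‖y‖² = ⟪Mᵀ w, z⟫ ≤ ‖Mᵀ w‖ ‖z‖ = ‖y‖ ‖z‖` by Cauchy–Schwarz.
-/

open Matrix

section

variable {m n p : Type*} [Fintype m] [Fintype n] [Fintype p]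

theorem Matrix.range_mulVecLin_mul_transpose {R : Type*} [Field R] [LinearOrder R]
    [IsStrictOrderedRing R] (M : Matrix m n R) :
    LinearMap.range (M * Mᵀ).mulVecLin = LinearMap.range M.mulVecLin :=
  Submodule.eq_of_le_of_finrank_eq
    (mulVecLin_mul M Mᵀ ▸ LinearMap.range_comp_le_range _ _) (rank_self_mul_transpose M)

theorem Matrix.dotProduct_sq_le_mul_dotProduct_self {R : Type*} [CommRing R] [LinearOrder R]
    [IsStrictOrderedRing R] (a b : n → R) :
    (a ⬝ᵥ b) ^ 2 ≤ (a ⬝ᵥ a) * (b ⬝ᵥ b) := by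
  simpa only [dotProduct, sq] using Finset.sum_mul_sq_le_sq_mul_sq Finset.univ a b

theorem Matrix.dotProduct_self_nonneg' {R : Type*} [CommRing R] [LinearOrder R]
    [IsStrictOrderedRing R] (v : n → R) : 0 ≤ v ⬝ᵥ v :=
  Finset.sum_nonneg fun i _ => mul_self_nonneg (v i)

theorem Matrix.exists_mulVec_eq_of_mul_transpose_eq {T : Matrix m p ℝ} {M : Matrix m n ℝ}
    (h : T * Tᵀ = M * Mᵀ) (z : n → ℝ) :
    ∃ y, T *ᵥ y = M *ᵥ z ∧ y ⬝ᵥ y ≤ z ⬝ᵥ z := by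
  obtain ⟨w, hw⟩ : M *ᵥ z ∈ LinearMap.range (M * Mᵀ).mulVecLin :=
    M.range_mulVecLin_mul_transpose ▸ ⟨z, rfl⟩
  rw [mulVecLin_apply, ← h] at hw
  refine ⟨Tᵀ *ᵥ w, by rw [mulVec_mulVec, hw], ?_⟩
  have hy : (Tᵀ *ᵥ w) ⬝ᵥ (Tᵀ *ᵥ w) = w ⬝ᵥ (T * Tᵀ) *ᵥ w := by
    rw [← mulVec_mulVec, dotProduct_mulVec w T, mulVec_transpose]
  have hyz : (Tᵀ *ᵥ w) ⬝ᵥ (Tᵀ *ᵥ w) = (Mᵀ *ᵥ w) ⬝ᵥ z := by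
    rw [hy, hw, dotProduct_mulVec, mulVec_transpose]
  have hMw : (Mᵀ *ᵥ w) ⬝ᵥ (Mᵀ *ᵥ w) = (Tᵀ *ᵥ w) ⬝ᵥ (Tᵀ *ᵥ w) := by
    rw [hy, h, ← mulVec_mulVec, dotProduct_mulVec w M, mulVec_transpose]
  have hcs := dotProduct_sq_le_mul_dotProduct_self (Mᵀ *ᵥ w) z
  rw [← hyz, hMw, sq] at hcs
  rcases (dotProduct_self_nonneg' (Tᵀ *ᵥ w)).eq_or_lt with hy0 | hy0
  · exact hy0 ▸ dotProduct_self_nonneg' z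
  · exact le_of_mul_le_mul_left hcs hy0

variable [DecidableEq n]

theorem Matrix.PosDef.exists_isUnit_eq_mul_transpose {Q : Matrix n n ℝ} (hQ : Q.PosDef) :
    ∃ S : Matrix n n ℝ, IsUnit S ∧ Q = S * Sᵀ := by
  open scoped MatrixOrder in
  obtain ⟨B, hB⟩ := CStarAlgebra.nonneg_iff_eq_star_mul_self.mp hQ.posSemidef.nonneg
  rw [star_eq_conjTranspose, conjTranspose_eq_transpose_of_trivial] at hB
  refine ⟨Bᵀ, ?_, by rwa [transpose_transpose]⟩
  have hdet : IsUnit (Bᵀ.det * B.det) := by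
    rw [← det_mul, ← hB, ← isUnit_iff_isUnit_det]
    exact hQ.isUnit
  exact (isUnit_iff_isUnit_det _).mpr (isUnit_of_mul_isUnit_left hdet)

theorem Matrix.dotProduct_mul_transpose_inv_mulVec (S : Matrix n n ℝ) (η : n → ℝ) :
    η ⬝ᵥ ((S * Sᵀ)⁻¹ *ᵥ η) = (S⁻¹ *ᵥ η) ⬝ᵥ (S⁻¹ *ᵥ η) := by
  rw [Matrix.mul_inv_rev, ← mulVec_mulVec, dotProduct_mulVec, ← mulVec_transpose,
    transpose_nonsing_inv, transpose_transpose]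

end

theorem input_funnel_membership_general
    (n m : ℕ)
    (Q : Matrix (Fin n) (Fin n) ℝ) (hQ : Q.PosDef)
    (K : Matrix (Fin m) (Fin n) ℝ)
    (c : ℝ)
    (T : Matrix (Fin m) (Fin m) ℝ) (hT : T.PosSemidef)
    (hT2 : T * T = K * Q * Kᵀ) :
    ∀ η : Fin n → ℝ, η ⬝ᵥ (Q⁻¹ *ᵥ η) ≤ 1 / c →
      ∃ y : Fin m → ℝ,
        Real.sqrt (y ⬝ᵥ y) ≤ 1 / Real.sqrt c ∧ K *ᵥ η = T *ᵥ y := by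
  intro η hη
  obtain ⟨S, hS, rfl⟩ := hQ.exists_isUnit_eq_mul_transpose
  have hGram : T * Tᵀ = (K * S) * (K * S)ᵀ := by
    rw [← conjTranspose_eq_transpose_of_trivial, hT.isHermitian.eq, hT2, transpose_mul]
    simp only [Matrix.mul_assoc]
  obtain ⟨y, hTy, hy⟩ := exists_mulVec_eq_of_mul_transpose_eq hGram (S⁻¹ *ᵥ η)
  refine ⟨y, ?_, ?_⟩
  · rw [dotProduct_mul_transpose_inv_mulVec] at hη
    calc Real.sqrt (y ⬝ᵥ y) ≤ Real.sqrt (1 / c) := Real.sqrt_le_sqrt (hy.trans hη)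
      _ = 1 / Real.sqrt c := by rw [one_div, Real.sqrt_inv, one_div]
  · rw [hTy, mulVec_mulVec, Matrix.mul_assoc,
      mul_nonsing_inv S ((isUnit_iff_isUnit_det S).mp hS), Matrix.mul_one]

/-- With the linear feedback `ξ = Kη`, membership `η ∈ E_c = {η : ηᵀQ⁻¹η ≤ 1/c}`
implies `Kη` lies in the input funnel
`E_u = {(KQKᵀ)^{1/2} y : ‖y‖ ≤ 1/√c}`. -/
theorem input_funnel_membership
    (n m : ℕ) (hn : 0 < n) (hm : 0 < m)
    (Q : Matrix (Fin n) (Fin n) ℝ) (hQ : Q.PosDef)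
    (K : Matrix (Fin m) (Fin n) ℝ)
    (c : ℝ) (hc : 0 < c)
    (T : Matrix (Fin m) (Fin m) ℝ) (hT : T.PosSemidef)
    (hT2 : T * T = K * Q * Kᵀ) :
    ∀ η : Fin n → ℝ, η ⬝ᵥ (Q⁻¹ *ᵥ η) ≤ 1 / c →
      ∃ y : Fin m → ℝ,
        Real.sqrt (y ⬝ᵥ y) ≤ 1 / Real.sqrt c ∧ K *ᵥ η = T *ᵥ y :=
  input_funnel_membership_general n m Q hQ K c T hT hT2
end
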